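/- With q₁(x) = -(√2/B)·cos(√2 B x)·(tan(√2 B x) + tan(√2 a B)) on (-a,0) and q₂(x) = (1/B)·cos(B x)·(tan(a B) - tan(B x)) on (0,a), where a B ∈ (π/(2√2), π/2) satisfies √2·tan(√2 aB) = -tan(aB), one has the identity ∫_{-a}^0 q₁(x) dx / ∫_0^a q₂(x) dx = (1/√2)·j(√2 aB)/j(aB), where j(x) = (1-cos x)/sin x. -/

import Mathlib

open Real MeasureTheory

/-- j(x) = (1 - cos x)/sin x. -/
noncomputable def j (x : ℝ) : ℝ := (1 - Real.cos x) / Real.sin x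

/-- The left piece of the explicit two-phase eigenfunction. -/
noncomputable def q₁ (a B : ℝ) : ℝ → ℝ := fun x =>
  -(Real.sqrt 2 / B) * Real.cos (Real.sqrt 2 * B * x) *
    (Real.tan (Real.sqrt 2 * B * x) + Real.tan (Real.sqrt 2 * (a * B)))

/-- The right piece of the explicit two-phase eigenfunction. -/
noncomputable def q₂ (a B : ℝ) : ℝ → ℝ := fun x =>
  (1 / B) * Real.cos (B * x) * (Real.tan (a * B) - Real.tan (B * x))

lemma aux_integ (c k p q : ℝ) (hc : c ≠ 0) :
    ∫ x in p..q, (Real.sin (c * x) + k * Real.cos (c * x)) =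
      (k * Real.sin (c * q) - Real.cos (c * q)) / c
        - (k * Real.sin (c * p) - Real.cos (c * p)) / c := by
  apply intervalIntegral.integral_eq_sub_of_hasDerivAt
  · intro x _
    have h1 : HasDerivAt (fun x : ℝ => c * x) c x := by
      simpa using (hasDerivAt_id x).const_mul c
    have h2 := (Real.hasDerivAt_cos (c * x)).comp x h1
    have h3 := (Real.hasDerivAt_sin (c * x)).comp x h1
    have h4 := ((h3.const_mul k).sub h2).div_const c
    convert h4 using 1
    · rfl
    · rfl
    · field_simp; ring
  · apply Continuous.intervalIntegrable
    continuity

lemma countable_cos_zero (c : ℝ) (hc : c ≠ 0) :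
    Set.Countable {x : ℝ | Real.cos (c * x) = 0} := by
  have hsub : {x : ℝ | Real.cos (c * x) = 0} ⊆
      Set.range (fun n : ℤ => ((2 * (n : ℝ) + 1) * π / 2) / c) := by
    intro x hx
    rw [Set.mem_setOf_eq, Real.cos_eq_zero_iff] at hx
    obtain ⟨n, hn⟩ := hx
    exact ⟨n, by field_simp; linear_combination (-2) * hn⟩
  exact (Set.countable_range _).mono hsub

/-- The mass ratio identity ∫_{-a}^0 q₁ / ∫_0^a q₂ = (1/√2)·j(√2 aB)/j(aB). -/
theorem stmt5 (a B : ℝ) (ha : 0 < a) (hB : 0 < B)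
    (hmem : a * B ∈ Set.Ioo (π / (2 * Real.sqrt 2)) (π / 2))
    (hmatch : Real.sqrt 2 * Real.tan (Real.sqrt 2 * (a * B)) = - Real.tan (a * B)) :
    (∫ x in Set.Ioo (-a) 0, q₁ a B x) / (∫ x in Set.Ioo 0 a, q₂ a B x)
      = (1 / Real.sqrt 2) * (j (Real.sqrt 2 * (a * B)) / j (a * B)) := by
  have h2 : (0:ℝ) < Real.sqrt 2 := by positivity
  have h2lt : Real.sqrt 2 < 2 := by
    nlinarith [Real.sq_sqrt (by norm_num : (2:ℝ) ≥ 0), Real.sqrt_nonneg 2]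
  set s := a * B with hs
  set t := Real.sqrt 2 * (a * B) with ht
  obtain ⟨hmem1, hmem2⟩ := hmem
  have hspos : 0 < s := by positivity
  have hslt : s < π / 2 := hmem2
  have htgt : π / 2 < t := by
    rw [ht, ← hs]
    calc π / 2 = Real.sqrt 2 * (π / (2 * Real.sqrt 2)) := by
          field_simp
      _ < Real.sqrt 2 * s := by
          exact mul_lt_mul_of_pos_left hmem1 h2
  have htlt : t < π := by
    rw [ht, ← hs]
    calc Real.sqrt 2 * s < Real.sqrt 2 * (π / 2) :=
          mul_lt_mul_of_pos_left hslt h2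
      _ < 2 * (π / 2) := by
          exact mul_lt_mul_of_pos_right h2lt (by positivity)
      _ = π := by ring
  -- trig sign facts
  have hcs : 0 < Real.cos s := Real.cos_pos_of_mem_Ioo ⟨by linarith, hslt⟩
  have hss : 0 < Real.sin s := Real.sin_pos_of_pos_of_lt_pi hspos (by linarith)
  have hct : Real.cos t < 0 :=
    Real.cos_neg_of_pi_div_two_lt_of_lt htgt (by linarith [Real.pi_pos])
  have hst : 0 < Real.sin t := Real.sin_pos_of_pos_of_lt_pi (by linarith [Real.pi_pos]) htlt
  have hcs1 : Real.cos s < 1 := by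
    nlinarith [Real.sin_sq_add_cos_sq s]
  have hct1 : Real.cos t < 1 := by linarith
  have hctne : Real.cos t ≠ 0 := ne_of_lt hct
  have hcsne : Real.cos s ≠ 0 := ne_of_gt hcs
  -- matching condition in sin/cos form
  have hmatch' : Real.sqrt 2 * Real.sin t * Real.cos s = -(Real.sin s * Real.cos t) := by
    have e1 : Real.tan t = Real.sin t / Real.cos t := Real.tan_eq_sin_div_cos t
    have e2 : Real.tan s = Real.sin s / Real.cos s := Real.tan_eq_sin_div_cos s
    rw [e1, e2] at hmatch
    field_simp at hmatch
    linear_combination hmatch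
  -- compute the first integral
  have hc1 : Real.sqrt 2 * B ≠ 0 := by positivity
  have hI1 : (∫ x in Set.Ioo (-a) 0, q₁ a B x)
      = -(1 / B ^ 2) * ((1 - Real.cos t) / Real.cos t) := by
    have hae : (fun x => q₁ a B x) =ᵐ[volume.restrict (Set.Ioo (-a) 0)]
        (fun x => -(Real.sqrt 2 / B) *
          (Real.sin (Real.sqrt 2 * B * x) + Real.tan t * Real.cos (Real.sqrt 2 * B * x))) := by
      apply ae_restrict_of_ae
      have hnull : volume {x : ℝ | Real.cos (Real.sqrt 2 * B * x) = 0} = 0 :=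
        (countable_cos_zero _ hc1).measure_zero _
      filter_upwards [measure_eq_zero_iff_ae_notMem.mp hnull] with x hx
      have hxc : Real.cos (Real.sqrt 2 * B * x) ≠ 0 := hx
      simp only [q₁]
      rw [Real.tan_eq_sin_div_cos]
      field_simp
      rw [ht]; ring_nf
    rw [integral_congr_ae hae]
    rw [← MeasureTheory.integral_Ioc_eq_integral_Ioo,
      ← intervalIntegral.integral_of_le (by linarith : -a ≤ (0:ℝ))]
    rw [intervalIntegral.integral_const_mul]
    rw [aux_integ _ _ _ _ hc1]
    have e0 : Real.sqrt 2 * B * 0 = 0 := by ring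
    have ea : Real.sqrt 2 * B * (-a) = -t := by rw [ht]; ring
    rw [e0, ea, Real.sin_neg, Real.cos_neg, Real.sin_zero, Real.cos_zero,
      Real.tan_eq_sin_div_cos]
    have h22 : Real.sqrt 2 ^ 2 = 2 := Real.sq_sqrt (by norm_num)
    field_simp
    linear_combination (-1) * Real.sin_sq_add_cos_sq t
  -- compute the second integral
  have hc2 : B ≠ 0 := ne_of_gt hB
  have hI2 : (∫ x in Set.Ioo 0 a, q₂ a B x)
      = (1 / B ^ 2) * ((1 - Real.cos s) / Real.cos s) := by
    have hae : (fun x => q₂ a B x) =ᵐ[volume.restrict (Set.Ioo 0 a)]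
        (fun x => (-(1 / B)) *
          (Real.sin (B * x) + (-Real.tan s) * Real.cos (B * x))) := by
      apply ae_restrict_of_ae
      have hnull : volume {x : ℝ | Real.cos (B * x) = 0} = 0 :=
        (countable_cos_zero _ hc2).measure_zero _
      filter_upwards [measure_eq_zero_iff_ae_notMem.mp hnull] with x hx
      have hxc : Real.cos (B * x) ≠ 0 := hx
      simp only [q₂]
      rw [Real.tan_eq_sin_div_cos (B * x)]
      field_simp
      rw [hs]; ring_nf
    rw [integral_congr_ae hae]
    rw [← MeasureTheory.integral_Ioc_eq_integral_Ioo,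
      ← intervalIntegral.integral_of_le (by linarith : (0:ℝ) ≤ a)]
    rw [intervalIntegral.integral_const_mul]
    rw [aux_integ _ _ _ _ hc2]
    have e0 : B * 0 = 0 := by ring
    have ea : B * a = s := by rw [hs]; ring
    rw [e0, ea, Real.sin_zero, Real.cos_zero, Real.tan_eq_sin_div_cos]
    field_simp
    linear_combination Real.sin_sq_add_cos_sq s
  rw [hI1, hI2]
  simp only [j]
  clear_value t s
  clear hmatch hmem1 hmem2 hI1 hI2
  have hstne : Real.sin t ≠ 0 := ne_of_gt hst
  have hssne : Real.sin s ≠ 0 := ne_of_gt hss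
  have h1cs : (1:ℝ) - Real.cos s ≠ 0 := by linarith
  have hBne : B ≠ 0 := ne_of_gt hB
  have h2ne : Real.sqrt 2 ≠ 0 := ne_of_gt h2
  have h22 : Real.sqrt 2 ^ 2 = 2 := Real.sq_sqrt (by norm_num)
  field_simp
  ring_nf at hmatch' ⊢
  linear_combination (-(1 - Real.cos t)) * hmatch'
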